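/- Let (S,*,n) be a two-dimensional symmetric composition algebra over a field k and let S = ⊕_{g∈G} S_g be a nontrivial grading by a group G (i.e., S_1 ≠ S, where S_1 is the identity component). Then exactly one of the following holds: (i) the characteristic of k is ≠ 2, and there is an element g ∈ G of order 2 such that S = S_1 ⊕ S_g, S_1 = ke for a para-unit e of S, and S_g = (S_1)^⊥ with respect to the polar form; or (ii) there is an element g ∈ G of order 3 such that S_1 = 0, S = S_g ⊕ S_{g²}, S_g = kx for an element x with n(x) = 0 and n(x, x*x) ≠ 0, and S_{g²} = k(x*x); in particular the norm n is isotropic. -/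

import Mathlib

open QuadraticMap

/-!
Linearizing `(x * y) * x = n(x) y` gives `(x * y) * z + (z * y) * x = n(x, z) y`. The first
identity shows that a homogeneous `x ∈ S_g` with `n(x) ≠ 0` forces `g² = 1`, because `n(x) x`
lies in `S_{g³}`; the second shows that `S_1` is orthogonal to every other component. As
`dim S = 2`, at most two components are nonzero and each of them is a line.

If `S_1 ≠ 0`, nondegeneracy makes both lines anisotropic, so the other degree `g` has order 2,
`S_1` is spanned by an idempotent `e`, and multiplication by `e` on either side is `-1` on `S_g`,
which makes `e` a para-unit. If `S_1 = 0`, every homogeneous element is isotropic; for the two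
degrees `a ≠ b` of the support, `b a` lies outside the support, so `y * x = 0` for `y ∈ S_b`,
and then `(x * x) * y = n(x, y) x ≠ 0` gives `a² = b`, symmetrically `b² = a`, hence `a³ = 1`.
-/

section

variable {k S : Type*} [Field k] [AddCommGroup S] [Module k S]

structure IsSymmetricComposition (mul : S →ₗ[k] S →ₗ[k] S) (n : QuadraticForm k S) : Prop where
  nondeg : ∀ x, (∀ y, polar n x y = 0) → x = 0
  map_mul : ∀ x y, n (mul x y) = n x * n y
  polar_assoc : ∀ x y z, polar n (mul x y) z = polar n x (mul y z)

def IsParaUnit (mul : S →ₗ[k] S →ₗ[k] S) (n : QuadraticForm k S) (e : S) : Prop :=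
  ∀ x, mul e x = polar n e x • e - x ∧ mul x e = polar n e x • e - x

structure IsGrading {G : Type*} [Group G] [DecidableEq G] (mul : S →ₗ[k] S →ₗ[k] S)
    (A : G → Submodule k S) : Prop where
  isInternal : DirectSum.IsInternal A
  mul_mem : ∀ g h, ∀ x ∈ A g, ∀ y ∈ A h, mul x y ∈ A (g * h)

variable {mul : S →ₗ[k] S →ₗ[k] S} {n : QuadraticForm k S}

theorem IsParaUnit.ne_zero [Nontrivial S] {e : S} (he : IsParaUnit mul n e) : e ≠ 0 := by
  obtain ⟨x, hx⟩ := exists_ne (0 : S)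
  rintro rfl
  have h := (he x).1
  simp only [map_zero, LinearMap.zero_apply, smul_zero, zero_sub, zero_eq_neg] at h
  exact hx h

theorem polar_eq_zero_of_forall_mem_eq_zero {P : Submodule k S} (hP : ∀ u ∈ P, n u = 0)
    {x y : S} (hx : x ∈ P) (hy : y ∈ P) : polar n x y = 0 := by
  rw [polar, hP _ (P.add_mem hx hy), hP x hx, hP y hy, sub_zero, sub_zero]

theorem eq_zero_of_polar_eq_zero_of_sup_eq_top (hnondeg : ∀ x, (∀ y, polar n x y = 0) → x = 0)
    {P Q : Submodule k S} (hPQ : P ⊔ Q = ⊤) {x : S} (hP : ∀ p ∈ P, polar n x p = 0)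
    (hQ : ∀ q ∈ Q, polar n x q = 0) : x = 0 := by
  refine hnondeg x fun y => ?_
  obtain ⟨p, hp, q, hq, rfl⟩ := Submodule.mem_sup.mp (hPQ ▸ Submodule.mem_top : y ∈ P ⊔ Q)
  rw [polar_add_right, hP p hp, hQ q hq, add_zero]

theorem mem_iff_polar_eq_zero_of_sup_eq_top (hnondeg : ∀ x, (∀ y, polar n x y = 0) → x = 0)
    {P Q : Submodule k S} (hPQ : P ⊔ Q = ⊤) (horth : ∀ p ∈ P, ∀ q ∈ Q, polar n q p = 0) {z : S} :
    z ∈ Q ↔ ∀ p ∈ P, polar n z p = 0 := by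
  refine ⟨fun hz p hp => horth p hp z hz, fun hz => ?_⟩
  obtain ⟨p, hp, q, hq, rfl⟩ := Submodule.mem_sup.mp (hPQ ▸ Submodule.mem_top : z ∈ P ⊔ Q)
  have hp0 : p = 0 := by
    refine eq_zero_of_polar_eq_zero_of_sup_eq_top hnondeg hPQ (fun p' hp' => ?_)
      (fun q' hq' => polar_comm n p q' ▸ horth p hp q' hq')
    rw [← add_sub_cancel_right p q, polar_sub_left, hz p' hp', horth p' hp' q hq, sub_zero]
  rwa [hp0, zero_add]

theorem sup_eq_top_of_disjoint_of_finrank_eq_two (hdim : Module.finrank k S = 2)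
    {P Q : Submodule k S} (hPQ : Disjoint P Q) (hP : P ≠ ⊥) (hQ : Q ≠ ⊥) : P ⊔ Q = ⊤ := by
  have : FiniteDimensional k S := .of_finrank_pos (by omega)
  have hP1 := Submodule.one_le_finrank_iff.mpr hP
  have hQ1 := Submodule.one_le_finrank_iff.mpr hQ
  exact Submodule.eq_top_of_disjoint P Q (by omega) hPQ

theorem eq_span_singleton_of_disjoint_of_finrank_eq_two (hdim : Module.finrank k S = 2)
    {P Q : Submodule k S} (hPQ : Disjoint P Q) (hQ : Q ≠ ⊥) {x : S} (hx : x ∈ P) (hx0 : x ≠ 0) :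
    P = k ∙ x := by
  have : FiniteDimensional k S := .of_finrank_pos (by omega)
  have hQ1 := Submodule.one_le_finrank_iff.mpr hQ
  have hle := Submodule.finrank_add_finrank_le_of_disjoint hPQ
  refine (Submodule.eq_of_le_of_finrank_le
    ((Submodule.span_singleton_le_iff_mem _ _).mpr hx) ?_).symm
  rw [finrank_span_singleton hx0]
  omega

namespace DirectSum.IsInternal

variable {G : Type*} [DecidableEq G] {A : G → Submodule k S}

theorem eq_zero_of_mem_of_mem (hA : IsInternal A) {a b : G} (hab : a ≠ b) {x : S}
    (ha : x ∈ A a) (hb : x ∈ A b) : x = 0 :=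
  Submodule.disjoint_def.mp (hA.submodule_iSupIndep.pairwiseDisjoint hab) x ha hb

theorem exists_ne_bot_of_ne_top (hA : IsInternal A) {a : G} (ha : A a ≠ ⊤) :
    ∃ b ≠ a, A b ≠ ⊥ := by
  by_contra! h
  refine ha (top_le_iff.mp (hA.submodule_iSup_eq_top ▸ iSup_le fun b => ?_))
  by_cases hb : b = a
  · exact hb ▸ le_rfl
  · exact (h b hb).le.trans bot_le

theorem sup_eq_top_of_finrank_eq_two (hA : IsInternal A) (hdim : Module.finrank k S = 2)
    {a b : G} (hab : a ≠ b) (ha : A a ≠ ⊥) (hb : A b ≠ ⊥) : A a ⊔ A b = ⊤ :=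
  sup_eq_top_of_disjoint_of_finrank_eq_two hdim (hA.submodule_iSupIndep.pairwiseDisjoint hab) ha hb

theorem eq_bot_of_finrank_eq_two (hA : IsInternal A) (hdim : Module.finrank k S = 2)
    {a b : G} (hab : a ≠ b) (ha : A a ≠ ⊥) (hb : A b ≠ ⊥) {c : G} (hca : c ≠ a) (hcb : c ≠ b) :
    A c = ⊥ := by
  have hle : A a ⊔ A b ≤ ⨆ (j) (_ : j ≠ c), A j :=
    sup_le (le_biSup A hca.symm) (le_biSup A hcb.symm)
  rw [hA.sup_eq_top_of_finrank_eq_two hdim hab ha hb, top_le_iff] at hle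
  exact disjoint_top.mp (hle ▸ hA.submodule_iSupIndep c)

theorem eq_span_singleton_of_finrank_eq_two (hA : IsInternal A) (hdim : Module.finrank k S = 2)
    {a b : G} (hab : a ≠ b) (hb : A b ≠ ⊥) {x : S} (hx : x ∈ A a) (hx0 : x ≠ 0) :
    A a = k ∙ x :=
  eq_span_singleton_of_disjoint_of_finrank_eq_two hdim
    (hA.submodule_iSupIndep.pairwiseDisjoint hab) hb hx hx0

theorem polar_ne_zero_of_finrank_eq_two (hnondeg : ∀ x, (∀ y, polar n x y = 0) → x = 0)
    (hA : IsInternal A) (hdim : Module.finrank k S = 2) {c d : G} (hcd : c ≠ d) (hc : A c ≠ ⊥)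
    {x y : S} (hx0 : x ≠ 0) (hxc : ∀ p ∈ A c, polar n x p = 0) (hy : y ∈ A d) (hy0 : y ≠ 0) :
    polar n x y ≠ 0 := by
  have hd : A d ≠ ⊥ := (Submodule.ne_bot_iff _).mpr ⟨y, hy, hy0⟩
  have hsup := hA.sup_eq_top_of_finrank_eq_two hdim hcd hc hd
  rw [hA.eq_span_singleton_of_finrank_eq_two hdim hcd.symm hc hy hy0] at hsup
  refine fun hxy => hx0 (eq_zero_of_polar_eq_zero_of_sup_eq_top hnondeg hsup hxc fun q hq => ?_)
  obtain ⟨t, rfl⟩ := Submodule.mem_span_singleton.mp hq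
  rw [polar_smul_right, hxy, smul_zero]

end DirectSum.IsInternal

theorem polar_mul_mul_left (hcomp : ∀ x y, n (mul x y) = n x * n y) (x y z : S) :
    polar n (mul x y) (mul x z) = n x * polar n y z := by
  simp only [polar, ← map_add (mul x), hcomp]
  ring

namespace IsSymmetricComposition

theorem mul_mul_self (hS : IsSymmetricComposition mul n) (x y : S) :
    mul (mul x y) x = n x • y :=
  sub_eq_zero.mp <| hS.nondeg _ fun z => by
    rw [polar_sub_left, hS.polar_assoc, polar_mul_mul_left hS.map_mul, polar_smul_left,
      smul_eq_mul, sub_self]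

theorem mul_mul_add_mul_mul (hS : IsSymmetricComposition mul n) (x y z : S) :
    mul (mul x y) z + mul (mul z y) x = polar n x z • y := by
  have h := hS.mul_mul_self (x + z) y
  simp only [map_add, LinearMap.add_apply, hS.mul_mul_self] at h
  rw [polar, sub_smul, sub_smul, ← h]
  abel

theorem exists_smul_mul_self_eq (hS : IsSymmetricComposition mul n) {x : S} (hnx : n x ≠ 0)
    (hxx : mul x x ∈ k ∙ x) : ∃ c : k, c ≠ 0 ∧ mul (c • x) (c • x) = c • x := by
  obtain ⟨t, ht⟩ := Submodule.mem_span_singleton.mp hxx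
  have hx0 : x ≠ 0 := by rintro rfl; exact hnx (map_zero n)
  have ht0 : t ≠ 0 := by
    rintro rfl
    have h := hS.mul_mul_self x x
    rw [← ht, zero_smul, map_zero, LinearMap.zero_apply] at h
    exact smul_ne_zero hnx hx0 h.symm
  refine ⟨t⁻¹, inv_ne_zero ht0, ?_⟩
  rw [LinearMap.map_smul₂, map_smul, ← ht, smul_smul, smul_smul, inv_mul_cancel_right₀ ht0]

theorem norm_eq_one_of_mul_self_eq (hS : IsSymmetricComposition mul n) {e : S}
    (hee : mul e e = e) (he0 : e ≠ 0) : n e = 1 := by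
  have h := hS.mul_mul_self e e
  rw [hee, hee] at h
  exact smul_left_injective k he0 (h.symm.trans (one_smul k e).symm)

end IsSymmetricComposition

theorem IsParaUnit.of_sup_eq_top {e : S} {Q : Submodule k S} (hsup : k ∙ e ⊔ Q = ⊤)
    (hee : mul e e = e) (hne : n e = 1) (horth : ∀ q ∈ Q, polar n e q = 0)
    (hQ : ∀ q ∈ Q, mul e q = -q ∧ mul q e = -q) : IsParaUnit mul n e := by
  intro x
  obtain ⟨p, hp, q, hq, rfl⟩ := Submodule.mem_sup.mp (hsup ▸ Submodule.mem_top : x ∈ k ∙ e ⊔ Q)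
  obtain ⟨t, rfl⟩ := Submodule.mem_span_singleton.mp hp
  have hpol : polar n e (t • e + q) = 2 * t := by
    rw [polar_add_right, polar_smul_right, horth q hq, polar_self, hne, add_zero, smul_eq_mul,
      nsmul_eq_mul, Nat.cast_ofNat, mul_one, mul_comm]
  simp only [map_add, map_smul, LinearMap.add_apply, LinearMap.smul_apply, hee, (hQ q hq).1,
    (hQ q hq).2, hpol]
  constructor <;> module

namespace IsGrading

variable {G : Type*} [Group G] [DecidableEq G] {A : G → Submodule k S}

theorem mul_self_eq_one_of_norm_ne_zero (hA : IsGrading mul A) (hS : IsSymmetricComposition mul n)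
    {g : G} {x : S} (hx : x ∈ A g) (hnx : n x ≠ 0) : g * g = 1 := by
  have hx0 : x ≠ 0 := by rintro rfl; exact hnx (map_zero n)
  have hmem : n x • x ∈ A (g * g * g) :=
    hS.mul_mul_self x x ▸ hA.mul_mem _ _ _ (hA.mul_mem _ _ _ hx _ hx) _ hx
  by_contra h
  exact smul_ne_zero hnx hx0
    (hA.isInternal.eq_zero_of_mem_of_mem (mul_eq_right.not.mpr h) hmem ((A g).smul_mem _ hx))

theorem norm_eq_zero_of_one_eq_bot (hA : IsGrading mul A) (hS : IsSymmetricComposition mul n)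
    (h1 : A 1 = ⊥) {g : G} {x : S} (hx : x ∈ A g) : n x = 0 := by
  by_contra hnx
  have hxx := hA.mul_mem g g x hx x hx
  rw [hA.mul_self_eq_one_of_norm_ne_zero hS hx hnx, h1, Submodule.mem_bot] at hxx
  have h := hS.mul_mul_self x x
  rw [hxx, map_zero, LinearMap.zero_apply, eq_comm, smul_eq_zero] at h
  exact h.elim hnx fun hx0 => hnx (hx0 ▸ map_zero n)

theorem polar_eq_zero_of_mem_one (hA : IsGrading mul A) (hS : IsSymmetricComposition mul n)
    {g : G} (hg : g ≠ 1) {x u : S} (hx : x ∈ A 1) (hu : u ∈ A g) : polar n x u = 0 := by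
  have hmem : polar n x u • x ∈ A g := by
    rw [← hS.mul_mul_add_mul_mul x x u]
    refine add_mem ?_ ?_
    · simpa using hA.mul_mem _ _ _ (hA.mul_mem _ _ _ hx _ hx) _ hu
    · simpa using hA.mul_mem _ _ _ (hA.mul_mem _ _ _ hu _ hx) _ hx
  rcases smul_eq_zero.mp (hA.isInternal.eq_zero_of_mem_of_mem hg hmem ((A 1).smul_mem _ hx))
    with h | rfl
  · exact h
  · exact polar_zero_left n u

theorem polar_self_ne_zero_of_one_ne_bot (hA : IsGrading mul A)
    (hS : IsSymmetricComposition mul n) (hdim : Module.finrank k S = 2) {c d : G} (hcd : c ≠ d)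
    (hcd1 : c = 1 ∨ d = 1) (hd : A d ≠ ⊥) {x : S} (hx : x ∈ A c) (hx0 : x ≠ 0) :
    polar n x x ≠ 0 := by
  refine hA.isInternal.polar_ne_zero_of_finrank_eq_two hS.nondeg hdim hcd.symm hd hx0 ?_ hx hx0
  rcases hcd1 with rfl | rfl
  · exact fun p hp => hA.polar_eq_zero_of_mem_one hS hcd.symm hx hp
  · exact fun p hp => by rw [polar_comm]; exact hA.polar_eq_zero_of_mem_one hS hcd hp hx

theorem exists_mul_self_eq_self (hA : IsGrading mul A) (hS : IsSymmetricComposition mul n)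
    (hdim : Module.finrank k S = 2) {g : G} (hg1 : g ≠ 1) (hg : A g ≠ ⊥) (h1 : A 1 ≠ ⊥) :
    ∃ e ∈ A 1, e ≠ 0 ∧ mul e e = e := by
  obtain ⟨x, hx, hx0⟩ := Submodule.exists_mem_ne_zero_of_ne_bot h1
  have hnx : n x ≠ 0 := by
    have h := hA.polar_self_ne_zero_of_one_ne_bot hS hdim hg1.symm (.inl rfl) hg hx hx0
    rw [polar_self] at h
    exact right_ne_zero_of_smul h
  have hxx : mul x x ∈ k ∙ x := by
    rw [← hA.isInternal.eq_span_singleton_of_finrank_eq_two hdim hg1.symm hg hx hx0]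
    simpa using hA.mul_mem 1 1 x hx x hx
  obtain ⟨c, hc, hcx⟩ := hS.exists_smul_mul_self_eq hnx hxx
  exact ⟨c • x, (A 1).smul_mem c hx, smul_ne_zero hc hx0, hcx⟩

theorem mul_eq_neg_of_mem (hA : IsGrading mul A) (hS : IsSymmetricComposition mul n)
    (hdim : Module.finrank k S = 2) {g : G} (hg1 : g ≠ 1) {e : S} (he : e ∈ A 1) (he0 : e ≠ 0)
    (hee : mul e e = e) {w : S} (hw : w ∈ A g) : mul e w = -w ∧ mul w e = -w := by
  rcases eq_or_ne w 0 with rfl | hw0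
  · simp
  have h1 : A 1 ≠ ⊥ := (Submodule.ne_bot_iff _).mpr ⟨e, he, he0⟩
  have hg : A g ≠ ⊥ := (Submodule.ne_bot_iff _).mpr ⟨w, hw, hw0⟩
  have hnw : n w ≠ 0 := by
    have h := hA.polar_self_ne_zero_of_one_ne_bot hS hdim hg1 (.inr rfl) h1 hw hw0
    rw [polar_self] at h
    exact right_ne_zero_of_smul h
  obtain ⟨s, hs⟩ : ∃ s : k, s • e = mul w w := by
    rw [← Submodule.mem_span_singleton,
      ← hA.isInternal.eq_span_singleton_of_finrank_eq_two hdim hg1.symm hg he he0,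
      ← hA.mul_self_eq_one_of_norm_ne_zero hS hw hnw]
    exact hA.mul_mem g g w hw w hw
  obtain ⟨l, hl⟩ : ∃ l : k, l • w = mul e w := by
    rw [← Submodule.mem_span_singleton,
      ← hA.isInternal.eq_span_singleton_of_finrank_eq_two hdim hg1 h1 hw hw0]
    simpa using hA.mul_mem 1 g e he w hw
  have hs0 : s ≠ 0 := by
    rintro rfl
    have h := hS.mul_mul_self w w
    rw [← hs, zero_smul, map_zero, LinearMap.zero_apply] at h
    exact smul_ne_zero hnw hw0 h.symm
  -- `(e * w) * w + (w * w) * e = n(e, w) w = 0`, with `e * w = l w` and `w * w = s e`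
  have hl1 : l = -1 := by
    have h := hS.mul_mul_add_mul_mul e w w
    rw [← hl, LinearMap.map_smul₂, ← hs, LinearMap.map_smul₂, hee, smul_smul, ← add_smul,
      hA.polar_eq_zero_of_mem_one hS hg1 he hw, zero_smul, smul_eq_zero] at h
    have h' : (l + 1) * s = 0 := by rw [add_mul, one_mul]; exact h.resolve_right he0
    exact eq_neg_of_add_eq_zero_left ((mul_eq_zero.mp h').resolve_right hs0)
  have hew : mul e w = -w := by rw [← hl, hl1, neg_one_smul]
  refine ⟨hew, ?_⟩
  have h := hS.mul_mul_self e w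
  rw [hew, map_neg, LinearMap.neg_apply, hS.norm_eq_one_of_mul_self_eq hee he0, one_smul] at h
  exact neg_eq_iff_eq_neg.mp h

theorem grading_of_one_ne_bot (hA : IsGrading mul A) (hS : IsSymmetricComposition mul n)
    (hdim : Module.finrank k S = 2) {g : G} (hg1 : g ≠ 1) (hg : A g ≠ ⊥) (h1 : A 1 ≠ ⊥) :
    ringChar k ≠ 2 ∧ orderOf g = 2 ∧ (∀ h : G, h ≠ 1 → h ≠ g → A h = ⊥) ∧
      ∃ e : S, IsParaUnit mul n e ∧ A 1 = k ∙ e ∧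
        ∀ z : S, z ∈ A g ↔ ∀ w ∈ A 1, polar n z w = 0 := by
  obtain ⟨e, he, he0, hee⟩ := hA.exists_mul_self_eq_self hS hdim hg1 hg h1
  obtain ⟨w, hw, hw0⟩ := Submodule.exists_mem_ne_zero_of_ne_bot hg
  have hne : n e = 1 := hS.norm_eq_one_of_mul_self_eq hee he0
  have hsup : A 1 ⊔ A g = ⊤ := hA.isInternal.sup_eq_top_of_finrank_eq_two hdim hg1.symm h1 hg
  have hspan : A 1 = k ∙ e :=
    hA.isInternal.eq_span_singleton_of_finrank_eq_two hdim hg1.symm hg he he0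
  have horth : ∀ p ∈ A 1, ∀ q ∈ A g, polar n q p = 0 := fun p hp q hq => by
    rw [polar_comm]; exact hA.polar_eq_zero_of_mem_one hS hg1 hp hq
  have hchar : ringChar k ≠ 2 := fun hk => by
    have h := hA.polar_self_ne_zero_of_one_ne_bot hS hdim hg1.symm (.inl rfl) hg he he0
    rw [polar_self, hne, nsmul_one] at h
    exact h (by exact_mod_cast (ringChar.spec k 2).mpr (hk ▸ dvd_rfl))
  have hgg : g ^ 2 = 1 := by
    rw [_root_.sq]
    refine hA.mul_self_eq_one_of_norm_ne_zero hS hw fun hnw => ?_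
    refine hA.polar_self_ne_zero_of_one_ne_bot hS hdim hg1 (.inr rfl) h1 hw hw0 ?_
    rw [polar_self, hnw, smul_zero]
  refine ⟨hchar, orderOf_eq_prime hgg hg1,
    fun h hh1 hhg => hA.isInternal.eq_bot_of_finrank_eq_two hdim hg1.symm h1 hg hh1 hhg, e,
    IsParaUnit.of_sup_eq_top (hspan ▸ hsup) hee hne
      (fun q hq => hA.polar_eq_zero_of_mem_one hS hg1 he hq)
      (fun q hq => hA.mul_eq_neg_of_mem hS hdim hg1 he he0 hee hq),
    hspan, fun z => mem_iff_polar_eq_zero_of_sup_eq_top hS.nondeg hsup horth⟩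

theorem mul_self_eq_of_one_eq_bot (hA : IsGrading mul A) (hS : IsSymmetricComposition mul n)
    (hdim : Module.finrank k S = 2) (h1 : A 1 = ⊥) {a b : G} (hab : a ≠ b) (hb : A b ≠ ⊥)
    {x : S} (hx : x ∈ A a) (hx0 : x ≠ 0) : a * a = b ∧ mul x x ≠ 0 := by
  have ha : A a ≠ ⊥ := (Submodule.ne_bot_iff _).mpr ⟨x, hx, hx0⟩
  have ha1 : a ≠ 1 := by rintro rfl; exact ha h1
  have hb1 : b ≠ 1 := by rintro rfl; exact hb h1
  obtain ⟨y, hy, hy0⟩ := Submodule.exists_mem_ne_zero_of_ne_bot hb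
  have hxy : polar n x y ≠ 0 :=
    hA.isInternal.polar_ne_zero_of_finrank_eq_two hS.nondeg hdim hab ha hx0
      (fun p hp => polar_eq_zero_of_forall_mem_eq_zero
        (fun u hu => hA.norm_eq_zero_of_one_eq_bot hS h1 hu) hx hp) hy hy0
  have hyx : mul y x = 0 := by
    have hmem := hA.mul_mem b a y hy x hx
    rwa [hA.isInternal.eq_bot_of_finrank_eq_two hdim hab ha hb (mul_eq_right.not.mpr hb1)
      (mul_eq_left.not.mpr ha1), Submodule.mem_bot] at hmem
  have hxxy : mul (mul x x) y = polar n x y • x := by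
    simpa [hyx] using hS.mul_mul_add_mul_mul x x y
  have hxx : mul x x ≠ 0 := fun h => smul_ne_zero hxy hx0 (by simpa [h] using hxxy.symm)
  refine ⟨by_contra fun h => hxx ?_, hxx⟩
  have hmem := hA.mul_mem a a x hx x hx
  rwa [hA.isInternal.eq_bot_of_finrank_eq_two hdim hab ha hb (mul_eq_left.not.mpr ha1) h,
    Submodule.mem_bot] at hmem

theorem grading_of_one_eq_bot (hA : IsGrading mul A) (hS : IsSymmetricComposition mul n)
    (hdim : Module.finrank k S = 2) (h1 : A 1 = ⊥) {a : G} (ha : A a ≠ ⊥) :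
    orderOf a = 3 ∧ (∀ h : G, h ≠ a → h ≠ a ^ 2 → A h = ⊥) ∧
      ∃ x : S, x ≠ 0 ∧ n x = 0 ∧ polar n x (mul x x) ≠ 0 ∧
        A a = k ∙ x ∧ A (a ^ 2) = k ∙ mul x x := by
  have hiso : ∀ {c : G} {u : S}, u ∈ A c → n u = 0 := hA.norm_eq_zero_of_one_eq_bot hS h1
  have ha1 : a ≠ 1 := by rintro rfl; exact ha h1
  obtain ⟨x, hx, hx0⟩ := Submodule.exists_mem_ne_zero_of_ne_bot ha
  have hxa : ∀ p ∈ A a, polar n x p = 0 := fun p hp =>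
    polar_eq_zero_of_forall_mem_eq_zero (fun u hu => hiso hu) hx hp
  have hatop : A a ≠ ⊤ := fun h => hx0 (hS.nondeg x fun y => hxa y (h ▸ Submodule.mem_top))
  obtain ⟨b, hba, hb⟩ := hA.isInternal.exists_ne_bot_of_ne_top hatop
  obtain ⟨y, hy, hy0⟩ := Submodule.exists_mem_ne_zero_of_ne_bot hb
  obtain ⟨haa, hxx⟩ := hA.mul_self_eq_of_one_eq_bot hS hdim h1 hba.symm hb hx hx0
  have hbb := (hA.mul_self_eq_of_one_eq_bot hS hdim h1 hba ha hy hy0).1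
  have ha2 : a ^ 2 = b := by rw [_root_.sq, haa]
  have ha3 : a ^ 3 = 1 := mul_right_cancel (b := a) <|
    calc a ^ 3 * a = a * a * (a * a) := by simp only [pow_succ, pow_zero, one_mul, mul_assoc]
      _ = 1 * a := by rw [haa, hbb, one_mul]
  have hxxb : mul x x ∈ A b := haa ▸ hA.mul_mem a a x hx x hx
  refine ⟨orderOf_eq_prime ha3 ha1,
    fun h hha hhb => hA.isInternal.eq_bot_of_finrank_eq_two hdim hba.symm ha hb hha (ha2 ▸ hhb),
    x, hx0, hiso hx,
    hA.isInternal.polar_ne_zero_of_finrank_eq_two hS.nondeg hdim hba.symm ha hx0 hxa hxxb hxx,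
    hA.isInternal.eq_span_singleton_of_finrank_eq_two hdim hba.symm hb hx hx0,
    ha2 ▸ hA.isInternal.eq_span_singleton_of_finrank_eq_two hdim hba ha hxxb hxx⟩

end IsGrading

end

/-- classification of the nontrivial group gradings of a
two-dimensional symmetric composition algebra: either (i) char k ≠ 2 and the
grading is a ℤ₂-grading with identity component spanned by a para-unit and the
other component its orthogonal complement, or (ii) the grading is a ℤ₃-grading
with trivial identity component, `S_g = k x` with `n(x) = 0 ≠ n(x, x*x)` and
`S_{g²} = k (x*x)`; in particular `n` is isotropic.  Exactly one of the two
alternatives holds. -/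
theorem two_dim_symmetric_composition_gradings
    {k : Type*} [Field k] {S : Type*} [AddCommGroup S] [Module k S]
    (mul : S →ₗ[k] S →ₗ[k] S) (n : QuadraticForm k S)
    (hnondeg : ∀ x : S, (∀ y : S, polar n x y = 0) → x = 0)
    (hcomp : ∀ x y : S, n (mul x y) = n x * n y)
    (hassoc : ∀ x y z : S, polar n (mul x y) z = polar n x (mul y z))
    (hdim : Module.finrank k S = 2)
    {G : Type*} [Group G] [DecidableEq G]
    (A : G → Submodule k S)
    (hdecomp : DirectSum.IsInternal A)
    (hgrmul : ∀ g h : G, ∀ x ∈ A g, ∀ y ∈ A h, mul x y ∈ A (g * h))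
    (hnontriv : A 1 ≠ ⊤) :
    Xor'
      (ringChar k ≠ 2 ∧ ∃ g : G, orderOf g = 2 ∧
        (∀ h : G, h ≠ 1 → h ≠ g → A h = ⊥) ∧
        ∃ e : S,
          (∀ x : S, mul e x = polar n e x • e - x ∧ mul x e = polar n e x • e - x) ∧
          A 1 = Submodule.span k {e} ∧
          (∀ z : S, z ∈ A g ↔ ∀ w ∈ A 1, polar n z w = 0))
      (∃ g : G, orderOf g = 3 ∧ A 1 = ⊥ ∧
        (∀ h : G, h ≠ g → h ≠ g ^ 2 → A h = ⊥) ∧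
        ∃ x : S, n x = 0 ∧ polar n x (mul x x) ≠ 0 ∧
          A g = Submodule.span k {x} ∧ A (g ^ 2) = Submodule.span k {mul x x} ∧
          ∃ z : S, z ≠ 0 ∧ n z = 0) := by
  have hS : IsSymmetricComposition mul n := ⟨hnondeg, hcomp, hassoc⟩
  have hA : IsGrading mul A := ⟨hdecomp, hgrmul⟩
  obtain ⟨g, hg1, hg⟩ := hdecomp.exists_ne_bot_of_ne_top hnontriv
  by_cases h1 : A 1 = ⊥
  · obtain ⟨hg3, hsupp, x, hx0, hx, hxxx, hgx, hg2⟩ := hA.grading_of_one_eq_bot hS hdim h1 hg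
    refine Or.inr ⟨⟨g, hg3, h1, hsupp, x, hx, hxxx, hgx, hg2, x, hx0, hx⟩, ?_⟩
    rintro ⟨-, -, -, -, e, he, he1, -⟩
    have : Nontrivial S := Module.nontrivial_of_finrank_eq_succ hdim
    exact IsParaUnit.ne_zero he (Submodule.span_singleton_eq_bot.mp (he1 ▸ h1))
  · obtain ⟨hchar, hg2, hsupp, e, he, hspan, horth⟩ := hA.grading_of_one_ne_bot hS hdim hg1 hg h1
    exact Or.inl ⟨⟨hchar, g, hg2, hsupp, e, he, hspan, horth⟩, fun ⟨_, _, h, _⟩ => h1 h⟩
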